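/- Let G be a finitely generated group whose word problem WP(G) is recursively enumerable, and let H ≤ G be a finitely generated subgroup (with its own finite symmetric generating set). If X ⊆ A^G is an effectively closed subshift, then its H-projective subdynamics π_H(X) = {x ∈ A^H : ∃ y ∈ X, ∀ h ∈ H, x_h = y_h} is an effectively closed subshift of A^H. -/

import Mathlib

open scoped Classical

noncomputable section

namespace SDG

/-! ### Relativized computability -/

/-- Partial recursive functions `ℕ →. ℕ` relative to an oracle `O`. -/
inductive NatPartrecIn (O : ℕ →. ℕ) : (ℕ →. ℕ) → Prop
  | oracle : NatPartrecIn O O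
  | zero : NatPartrecIn O (pure 0)
  | succ : NatPartrecIn O Nat.succ
  | left : NatPartrecIn O ↑fun n : ℕ => n.unpair.1
  | right : NatPartrecIn O ↑fun n : ℕ => n.unpair.2
  | pair {f g} : NatPartrecIn O f → NatPartrecIn O g →
      NatPartrecIn O fun n => Nat.pair <$> f n <*> g n
  | comp {f g} : NatPartrecIn O f → NatPartrecIn O g →
      NatPartrecIn O fun n => g n >>= f
  | prec {f g} : NatPartrecIn O f → NatPartrecIn O g →
      NatPartrecIn O (Nat.unpaired fun a n =>
        n.rec (f a) fun y IH => do let i ← IH; g (Nat.pair a (Nat.pair y i)))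
  | rfind {f} : NatPartrecIn O f →
      NatPartrecIn O fun a => Nat.rfind fun n => (fun m => m = 0) <$> f (Nat.pair a n)

/-- A partial function between `Primcodable` types is partial recursive in the oracle `O`. -/
def PartrecIn (O : ℕ →. ℕ) {α σ : Type} [Primcodable α] [Primcodable σ] (f : α →. σ) : Prop :=
  NatPartrecIn O fun n =>
    Part.bind (Part.ofOption (Encodable.decode (α := α) n)) fun a => (f a).map Encodable.encode

/-- A predicate is recursively enumerable in the oracle `O` if it is the domain of a partial
function recursive in `O`. -/
def RePredIn (O : ℕ →. ℕ) {α : Type} [Primcodable α] (p : α → Prop) : Prop :=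
  PartrecIn O fun a => Part.assert (p a) fun _ => Part.some ()

/-- The characteristic function (as an oracle `ℕ →. ℕ`) of a set `L` of elements of a
`Primcodable` type: on the code of an element of `L` it answers `1`, elsewhere `0`. -/
def charFun {α : Type} [Primcodable α] (L : Set α) : ℕ →. ℕ :=
  fun n => Part.some (if ∃ a ∈ L, Encodable.encode a = n then 1 else 0)

/-! ### Finitely generated groups, words and pattern codings -/

variable {G : Type} [Group G]

/-- The group element represented by a word over the generators `S`. -/
def wordEval {k : ℕ} (S : Fin k → G) (w : List (Fin k)) : G :=
  (w.map S).prod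

/-- `S : Fin k → G` is a finite symmetric generating family containing the identity. -/
def IsGenData {k : ℕ} (S : Fin k → G) : Prop :=
  (∃ i, S i = 1) ∧ (∀ i, ∃ j, S j = (S i)⁻¹) ∧ Subgroup.closure (Set.range S) = ⊤

/-- The word problem of `G` with respect to the generating family `S`. -/
def WP {k : ℕ} (S : Fin k → G) : Set (List (Fin k)) :=
  {w | wordEval S w = 1}

/-- A pattern coding over the alphabet `A`: a finite list of pairs (word, symbol). -/
abbrev PatternCoding (k : ℕ) (A : Type) : Type :=
  List (List (Fin k) × A)

/-- The subshift defined by a set `C` of pattern codings: configurations in which no translate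
of a coded pattern occurs. -/
def XC {k : ℕ} (S : Fin k → G) {A : Type} (C : Set (PatternCoding k A)) : Set (G → A) :=
  {x | ¬ ∃ (g : G) (c : PatternCoding k A), c ∈ C ∧ ∀ p ∈ c, x (g * wordEval S p.1) = p.2}

/-- A set is effectively closed if it is defined by a recursively enumerable set of
pattern codings. -/
def EffectivelyClosed {k : ℕ} (S : Fin k → G) {A : Type} [Primcodable A]
    (X : Set (G → A)) : Prop :=
  ∃ C : Set (PatternCoding k A), REPred (· ∈ C) ∧ X = XC S C

/-- A set is `G`-effectively closed if it is defined by a set of pattern codings which is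
recursively enumerable with oracle the word problem of `G`. -/
def GEffectivelyClosed {k : ℕ} (S : Fin k → G) {A : Type} [Primcodable A]
    (X : Set (G → A)) : Prop :=
  ∃ C : Set (PatternCoding k A), RePredIn (charFun (WP S)) (· ∈ C) ∧ X = XC S C

/-- A pattern coding is consistent if words representing the same group element receive the
same symbol. -/
def Consistent {k : ℕ} (S : Fin k → G) {A : Type} (c : PatternCoding k A) : Prop :=
  ∀ p ∈ c, ∀ q ∈ c, wordEval S p.1 = wordEval S q.1 → p.2 = q.2

/-! ### Subshifts, SFTs, sofic subshifts -/

/-- `X ⊆ A^G` is a subshift: closed (for the product of the discrete topology) and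
shift-invariant. -/
def IsSubshift {A : Type} (X : Set (G → A)) : Prop :=
  (letI : TopologicalSpace A := ⊥; IsClosed X) ∧
    ∀ x ∈ X, ∀ g : G, (fun h => x (g⁻¹ * h)) ∈ X

/-- A pattern with finite support over the alphabet `A`. -/
structure Pattern (G : Type) (A : Type) where
  supp : Finset G
  val : (g : G) → g ∈ supp → A

/-- The pattern `p` occurs in the configuration `x` at position `g`. -/
def PatternOccurs {A : Type} (p : Pattern G A) (x : G → A) (g : G) : Prop :=
  ∀ (h : G) (hh : h ∈ p.supp), x (g * h) = p.val h hh

/-- The subshift defined by a set of forbidden patterns. -/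
def XPat {A : Type} (Fs : Set (Pattern G A)) : Set (G → A) :=
  {x | ¬ ∃ (g : G) (p : Pattern G A), p ∈ Fs ∧ PatternOccurs p x g}

/-- A subshift of finite type: defined by a finite set of forbidden patterns. -/
def IsSFT {A : Type} (X : Set (G → A)) : Prop :=
  ∃ Fs : Set (Pattern G A), Fs.Finite ∧ X = XPat Fs

/-- A witness that `X` is sofic: an SFT `Y` over a finite alphabet `B` together with a factor
code (continuous shift-equivariant surjection) from `Y` onto `X`. -/
structure SoficVia (G : Type) [Group G] {A : Type} (X : Set (G → A)) : Type 1 where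
  B : Type
  finB : Fintype B
  Y : Set (G → B)
  sft : IsSFT Y
  subY : IsSubshift Y
  phi : (G → B) → (G → A)
  cont : letI : TopologicalSpace B := ⊥
         letI : TopologicalSpace A := ⊥
         ContinuousOn phi Y
  equiv : ∀ y ∈ Y, ∀ g : G, phi (fun h => y (g⁻¹ * h)) = fun h => phi y (g⁻¹ * h)
  image : phi '' Y = X

/-- A subshift is sofic if it is the image of an SFT under a factor code. -/
def IsSofic {A : Type} (X : Set (G → A)) : Prop :=
  Nonempty (SoficVia G X)

/-- A factor code from `X` onto `Y`: continuous (discrete product topologies),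
shift-equivariant and surjective. -/
def FactorCode {A B : Type} (X : Set (G → A)) (Y : Set (G → B))
    (φ : (G → A) → (G → B)) : Prop :=
  (letI : TopologicalSpace A := ⊥
   letI : TopologicalSpace B := ⊥
   ContinuousOn φ X) ∧
  (∀ x ∈ X, ∀ g : G, φ (fun h => x (g⁻¹ * h)) = fun h => φ x (g⁻¹ * h)) ∧
  φ '' X = Y

/-- Two subshifts are conjugate if there is a shift-equivariant homeomorphism between them. -/
def Conjugate {A B : Type} (X : Set (G → A)) (Y : Set (G → B)) : Prop :=
  ∃ (φ : (G → A) → (G → B)) (ψ : (G → B) → (G → A)),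
    FactorCode X Y φ ∧ FactorCode Y X ψ ∧
    (∀ x ∈ X, ψ (φ x) = x) ∧ (∀ y ∈ Y, φ (ψ y) = y)

/-- The one-or-less subshift: configurations with at most one occurrence of the symbol `1`
(represented by `true`). -/
def Xle1 (G : Type) : Set (G → Bool) :=
  {x | ∀ g h : G, x g = true → x h = true → g = h}

/-! ### `G`-machines -/

/-- A `G`-machine: finite set of states, finite tape alphabet `A` with a blank symbol, initial
state, accepting states, and a transition function moving with the generators `Fin k`. -/
structure GMachine (k : ℕ) (A : Type) : Type 1 where
  Q : Type
  finQ : Fintype Q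
  blank : A
  q0 : Q
  QF : Set Q
  delta : A × Q → A × Q × Fin k

/-- One step of a `G`-machine in the fixed head model: if `δ(x(1),q) = (a,q',s)` then the new
configuration is `σ_{s⁻¹} x̃` where `x̃` is `x` with the value at `1` replaced by `a`. -/
def GMachine.step {k : ℕ} {A : Type} (M : GMachine k A) (S : Fin k → G) :
    (G → A) × M.Q → (G → A) × M.Q :=
  fun xq =>
    let t := M.delta (xq.1 1, xq.2)
    let xt : G → A := Function.update xq.1 1 t.1
    (fun h => xt (S t.2.2 * h), t.2.1)

/-- The configuration which equals the pattern `p` on its support and `blank` elsewhere. -/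
def Pattern.config {A : Type} (p : Pattern G A) (blank : A) : G → A :=
  fun g => if h : g ∈ p.supp then p.val g h else blank

/-- The `G`-machine `M` accepts the pattern `p` if starting from the configuration `x^p` in the
initial state it eventually reaches an accepting state. -/
def GMachine.Accepts {k : ℕ} {A : Type} (M : GMachine k A) (S : Fin k → G)
    (p : Pattern G A) : Prop :=
  ∃ n : ℕ, ((M.step S)^[n] (p.config M.blank, M.q0)).2 ∈ M.QF

/-- A set of patterns is `G`-recursively enumerable if some `G`-machine accepts exactly its
elements. -/
def GRecEnum {k : ℕ} (S : Fin k → G) {A : Type} (L : Set (Pattern G A)) : Prop :=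
  ∃ M : GMachine k A, ∀ p : Pattern G A, M.Accepts S p ↔ p ∈ L

/-- The consistent pattern coding `c` defines the pattern `p`. -/
def Defines {k : ℕ} (S : Fin k → G) {A : Type} (c : PatternCoding k A)
    (p : Pattern G A) : Prop :=
  (∀ g : G, g ∈ p.supp ↔ ∃ q ∈ c, wordEval S q.1 = g) ∧
  ∀ q ∈ c, ∀ hg : wordEval S q.1 ∈ p.supp, p.val (wordEval S q.1) hg = q.2

/-- `p(C)`: the set of patterns defined by the consistent pattern codings of `C`. -/
def patternsOf {k : ℕ} (S : Fin k → G) {A : Type} (C : Set (PatternCoding k A)) :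
    Set (Pattern G A) :=
  {p | ∃ c ∈ C, Consistent S c ∧ Defines S c p}

/-- A set of patterns is closed by extensions if any pattern extending a pattern of the set
also belongs to the set. -/
def ClosedByExtensions {A : Type} (L : Set (Pattern G A)) : Prop :=
  ∀ (p₁ p₂ : Pattern G A) (hsub : p₁.supp ⊆ p₂.supp),
    (∀ (g : G) (hg : g ∈ p₁.supp), p₂.val g (hsub hg) = p₁.val g hg) →
    p₁ ∈ L → p₂ ∈ L

/-! ### Balls, ends, amenability -/

/-- The ball of radius `n` in the word metric given by `S`. -/
def ballS {k : ℕ} (S : Fin k → G) (n : ℕ) : Set G :=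
  {x | ∃ w : List (Fin k), w.length ≤ n ∧ wordEval S w = x}

/-- Adjacency in the Cayley graph restricted to the set `V`. -/
def Adj {k : ℕ} (S : Fin k → G) (V : Set G) (a b : G) : Prop :=
  a ∈ V ∧ b ∈ V ∧ ∃ i, a * S i = b

/-- Reachability inside `V` in the Cayley graph of `(G,S)`. -/
def Reach {k : ℕ} (S : Fin k → G) (V : Set G) (a b : G) : Prop :=
  Relation.ReflTransGen (Adj S V) a b

/-- `G` has at least two ends: for some `n`, the complement of the ball of radius `n` in the
Cayley graph has at least two infinite connected components. -/
def HasTwoOrMoreEnds {k : ℕ} (S : Fin k → G) : Prop :=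
  ∃ (n : ℕ) (x y : G), x ∉ ballS S n ∧ y ∉ ballS S n ∧
    {z | Reach S (ballS S n)ᶜ x z}.Infinite ∧
    {z | Reach S (ballS S n)ᶜ y z}.Infinite ∧
    ¬ Reach S (ballS S n)ᶜ x y

/-- The Følner condition: `G` is amenable. -/
def FolnerAmenable (G : Type) [Group G] : Prop :=
  ∀ (K : Finset G) (ε : ℝ), 0 < ε →
    ∃ F : Finset G, F.Nonempty ∧ ∀ k ∈ K,
      ((F \ F.image (fun x => x * k)).card : ℝ) < ε * F.card

/-! ### `G × ℤ`, presentations, hardness and the domino problems -/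

/-- Generators of `G × ℤ`: the generators of `G` paired with `0`, together with `(1,±1)`. -/
def prodGens {k : ℕ} (S : Fin k → G) : Fin (k + 2) → G × Multiplicative ℤ :=
  fun i =>
    if h : (i : ℕ) < k then (S ⟨i, h⟩, 1)
    else if (i : ℕ) = k then (1, Multiplicative.ofAdd 1)
    else (1, Multiplicative.ofAdd (-1))

/-- The element of the free group over the generator indices represented by a word. -/
def freeWord {k : ℕ} (w : List (Fin k)) : FreeGroup (Fin k) :=
  (w.map FreeGroup.of).prod

/-- `G` is recursively presented with respect to `S`: there is a recursively enumerable set of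
relators (words over the generators) whose normal closure in the free group over the
generator indices is the kernel of the evaluation map. -/
def RecursivelyPresented {k : ℕ} (S : Fin k → G) : Prop :=
  ∃ R : Set (List (Fin k)), REPred (· ∈ R) ∧
    MonoidHom.ker (FreeGroup.lift S) = Subgroup.normalClosure (freeWord '' R)

/-- `L` is hard for the class of predicates recursively enumerable in the oracle `O`
(equivalently, hard for the halting problem of machines with oracle `O`): every
such predicate many-one reduces to `L` via a computable function. -/
def OracleREHard {α : Type} [Primcodable α] (O : ℕ →. ℕ) (L : Set α) : Prop :=
  ∀ p : ℕ → Prop, RePredIn O p → ∃ f : ℕ → α, Computable f ∧ ∀ n, p n ↔ f n ∈ L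

/-- The domino problem of `(K,T)`: pairs `(N, F)` of an alphabet size and a finite list of
pattern codings over `ℕ` such that no configuration with symbols `< N` avoids `F`. -/
def DP {K : Type} [Group K] {m : ℕ} (T : Fin m → K) : Set (ℕ × List (PatternCoding m ℕ)) :=
  {q | ¬ ∃ x : K → ℕ, (∀ g, x g < q.1) ∧ x ∈ XC T {c | c ∈ q.2}}

/-- The origin constrained domino problem of `(K,T)`: triples `((N,a),F)` such that no
configuration with symbols `< N` and the symbol `a` at the origin avoids `F`. -/
def OCDP {K : Type} [Group K] {m : ℕ} (T : Fin m → K) :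
    Set ((ℕ × ℕ) × List (PatternCoding m ℕ)) :=
  {q | ¬ ∃ x : K → ℕ, (∀ g, x g < q.1.1) ∧ x 1 = q.1.2 ∧ x ∈ XC T {c | c ∈ q.2}}

end SDG

/-!
A coding `c` over `H` is forbidden in the projective subdynamics exactly when its cylinder misses
`X = X_C`. By compactness of `A^G` this happens iff some finite list `D` of translates of codings of
`C` is forced: every configuration containing `c` contains a member of `D`. That condition only
concerns the finitely many words involved, so it says that every assignment of symbols to those
words which contains `c` and gives equal symbols to words equal in `G` contains a member of `D`.
Such certificates can be enumerated: at stage `s` we use the stage-`s` approximations of `C` and of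
the word problem. Fewer known identifications only allow more assignments, so a certificate found
at any stage is sound, and a genuine one is found once the finitely many relevant identifications
and codings of `D` have been enumerated.
-/

open Filter

section Computability

open Primrec

theorem Primrec.list_sections {α : Type*} [Primcodable α] : Primrec (@List.sections α) :=
  (list_foldr Primrec.id (const [[]])
    (list_flatMap (snd.comp snd)
      (list_map (fst.comp (snd.comp fst)) (list_cons.comp snd (snd.comp fst)).to₂).to₂).to₂).of_eq
    fun L => by induction L <;> simp_all

theorem PrimrecPred.imp {α : Type*} [Primcodable α] {p q : α → Prop} (hp : PrimrecPred p)
    (hq : PrimrecPred q) : PrimrecPred fun a => p a → q a :=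
  (hp.not.or hq).of_eq fun _ => imp_iff_not_or.symm

theorem PrimrecPred.forall_mem {α β : Type*} [Primcodable α] [Primcodable β] {f : α → List β}
    {R : α × β → Prop} (hf : Primrec f) (hR : PrimrecPred R) :
    PrimrecPred fun a => ∀ b ∈ f a, R (a, b) :=
  (PrimrecRel.swap (r := fun a b => R (a, b)) hR).forall_mem_list.comp hf Primrec.id

theorem PrimrecPred.exists_mem {α β : Type*} [Primcodable α] [Primcodable β] {f : α → List β}
    {R : α × β → Prop} (hf : Primrec f) (hR : PrimrecPred R) :
    PrimrecPred fun a => ∃ b ∈ f a, R (a, b) :=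
  (PrimrecRel.swap (r := fun a b => R (a, b)) hR).exists_mem_list.comp hf Primrec.id

theorem PrimrecRel.rePred_exists {α β : Type*} [Primcodable α] [Primcodable β]
    {R : α → β → Prop} (hR : PrimrecRel R) : REPred fun a => ∃ b, R a b := by
  classical
  have hf : Primrec₂ fun a n =>
      ((Encodable.decode (α := β) n).map fun b => decide (R a b)).getD false :=
    option_getD.comp (option_map (Primrec.decode.comp snd) (hR.decide.comp (fst.comp fst) snd).to₂)
      (const false)
  refine (Partrec.rfind hf.to_comp.partrec₂).dom_re.of_eq fun a =>
    ⟨fun ⟨n, hn, _⟩ => ?_, fun ⟨b, hb⟩ => ⟨Encodable.encode b, ?_, fun {_} _ => trivial⟩⟩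
  · cases h : Encodable.decode (α := β) n <;> simp_all [eq_comm (a := true)]
    exact ⟨_, hn⟩
  · simpa using hb

open Nat.Partrec Code in
theorem REPred.exists_primrecRel_stages {α : Type*} [Primcodable α] {p : α → Prop}
    (hp : REPred p) : ∃ R : ℕ → α → Prop, PrimrecRel R ∧ (∀ s a, R s a → p a) ∧
      ∀ a, p a → ∀ᶠ s in atTop, R s a := by
  obtain ⟨c, hc⟩ := exists_code.1 hp
  have hdom : ∀ a, p a ↔ ∃ x, x ∈ eval c (Encodable.encode a) := fun a => by
    rw [hc]; simp [Part.assert, Part.bind]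
  refine ⟨fun s a => (evaln s c (Encodable.encode a)).isSome, ?_, fun s a h => ?_, fun a h => ?_⟩
  · exact Primrec.eq.comp (option_isSome.comp (primrec_evaln.comp
      ((fst.pair (const c)).pair (Primrec.encode.comp snd)))) (const true)
  · obtain ⟨x, hx⟩ := Option.isSome_iff_exists.1 h
    exact (hdom a).2 ⟨x, evaln_sound hx⟩
  · obtain ⟨x, hx⟩ := (hdom a).1 h
    obtain ⟨s, hs⟩ := evaln_complete.1 hx
    exact eventually_atTop.2 ⟨s, fun t hst => Option.isSome_iff_exists.2 ⟨x, evaln_mono hst hs⟩⟩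

theorem PrimrecRel.list_mem {α : Type*} [Primcodable α] :
    PrimrecRel fun (a : α) (L : List α) => a ∈ L :=
  Primrec.eq.exists_mem_list.swap.of_eq fun _ _ => by simp

theorem PrimrecRel.list_subset {α : Type*} [Primcodable α] :
    PrimrecRel fun (L L' : List α) => L ⊆ L' :=
  (PrimrecPred.forall_mem Primrec.fst (PrimrecRel.list_mem.comp Primrec.snd
    (Primrec.snd.comp Primrec.fst))).of_eq fun _ => Iff.rfl

end Computability

namespace SDG

section Words

variable {G : Type} [Group G] {k : ℕ} (S : Fin k → G)

@[simp]
theorem wordEval_nil : wordEval S [] = 1 := rfl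

@[simp]
theorem wordEval_cons (i : Fin k) (w : List (Fin k)) :
    wordEval S (i :: w) = S i * wordEval S w := by
  simp [wordEval]

@[simp]
theorem wordEval_append (w₁ w₂ : List (Fin k)) :
    wordEval S (w₁ ++ w₂) = wordEval S w₁ * wordEval S w₂ := by
  simp [wordEval]

theorem wordEval_flatMap {K : Type} [Group K] {m : ℕ} {T : Fin m → K} (e : K →* G)
    {u : Fin m → List (Fin k)} (hu : ∀ i, wordEval S (u i) = e (T i)) (w : List (Fin m)) :
    wordEval S (w.flatMap u) = e (wordEval T w) := by
  induction w with
  | nil => simp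
  | cons i w ih => simp [hu, ih]

def wordInv (ι : Fin k → Fin k) (w : List (Fin k)) : List (Fin k) :=
  w.reverse.map ι

variable {S}

theorem wordEval_wordInv {ι : Fin k → Fin k} (hι : ∀ i, S (ι i) = (S i)⁻¹) (w : List (Fin k)) :
    wordEval S (wordInv ι w) = (wordEval S w)⁻¹ := by
  induction w with
  | nil => simp [wordInv]
  | cons i w ih => simp_all [wordInv]

theorem wordEval_append_wordInv_eq_one {ι : Fin k → Fin k} (hι : ∀ i, S (ι i) = (S i)⁻¹)
    {w w' : List (Fin k)} : wordEval S (w ++ wordInv ι w') = 1 ↔ wordEval S w = wordEval S w' := by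
  rw [wordEval_append, wordEval_wordInv hι, mul_inv_eq_one]

theorem IsGenData.exists_wordEval_eq (hS : IsGenData S) (g : G) : ∃ w, wordEval S w = g := by
  obtain ⟨-, hinv, hcl⟩ := hS
  choose ι hι using hinv
  induction (hcl ▸ Subgroup.mem_top g : g ∈ Subgroup.closure (Set.range S))
    using Subgroup.closure_induction with
  | mem x hx => obtain ⟨i, rfl⟩ := hx; exact ⟨[i], by simp⟩
  | one => exact ⟨[], rfl⟩
  | mul x y _ _ hx hy =>
    obtain ⟨w₁, rfl⟩ := hx; obtain ⟨w₂, rfl⟩ := hy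
    exact ⟨w₁ ++ w₂, wordEval_append S w₁ w₂⟩
  | inv x _ hx =>
    obtain ⟨w, rfl⟩ := hx
    exact ⟨wordInv ι w, wordEval_wordInv hι w⟩

end Words

section Forcing

variable {k : ℕ} {A : Type}

def shiftCoding (v : List (Fin k)) (c : PatternCoding k A) : PatternCoding k A :=
  c.map fun q => (v ++ q.1, q.2)

def forcingWords (c : PatternCoding k A) (D : List (List (Fin k) × PatternCoding k A)) :
    List (List (Fin k)) :=
  (c ++ D.flatMap fun d => shiftCoding d.1 d.2).map Prod.fst

def assignments [Fintype A] (W : List (List (Fin k))) : List (PatternCoding k A) :=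
  (W.map fun w => (Finset.univ : Finset A).toList.map (w, ·)).sections

theorem mem_assignments [Fintype A] {W : List (List (Fin k))} {Z : PatternCoding k A} :
    Z ∈ assignments W ↔ Z.map Prod.fst = W := by
  have hmem (p : List (Fin k) × A) (w) :
      p ∈ (Finset.univ : Finset A).toList.map (w, ·) ↔ p.1 = w := by
    simp [Prod.ext_iff, eq_comm]
  simp only [assignments, List.mem_sections, List.forall₂_map_right_iff, hmem]
  rw [← List.forall₂_map_left_iff (f := Prod.fst), List.forall₂_eq_eq_eq]

def ConsistentWith (E : List (Fin k) → List (Fin k) → Prop) (Z : PatternCoding k A) : Prop :=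
  ∀ t ∈ Z, ∀ t' ∈ Z, E t.1 t'.1 → t.2 = t'.2

def Forces [Fintype A] (E : List (Fin k) → List (Fin k) → Prop) (c : PatternCoding k A)
    (D : List (List (Fin k) × PatternCoding k A)) : Prop :=
  ∀ Z ∈ assignments (forcingWords c D), ConsistentWith E Z → c ⊆ Z →
    ∃ d ∈ D, shiftCoding d.1 d.2 ⊆ Z

theorem Forces.mono [Fintype A] {E E' : List (Fin k) → List (Fin k) → Prop}
    {c : PatternCoding k A} {D : List (List (Fin k) × PatternCoding k A)} (h : Forces E c D)
    (hE : ∀ w ∈ forcingWords c D, ∀ w' ∈ forcingWords c D, E w w' → E' w w') :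
    Forces E' c D := by
  intro Z hZ hcons
  have hwords : ∀ t ∈ Z, t.1 ∈ forcingWords c D := fun t ht =>
    mem_assignments.1 hZ ▸ List.mem_map_of_mem ht
  exact h Z hZ fun t ht t' ht' htt' =>
    hcons t ht t' ht' (hE _ (hwords t ht) _ (hwords t' ht') htt')

theorem forces_iff [Fintype A] [Nonempty A] {β : Type} (f : List (Fin k) → β)
    {c : PatternCoding k A} {D : List (List (Fin k) × PatternCoding k A)} :
    Forces (fun w w' => f w = f w') c D ↔
      ∀ y : β → A, (∀ p ∈ c, y (f p.1) = p.2) →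
        ∃ d ∈ D, ∀ q ∈ shiftCoding d.1 d.2, y (f q.1) = q.2 := by
  have hc_words {p} (hp : p ∈ c) : p.1 ∈ forcingWords c D :=
    List.mem_map_of_mem (List.mem_append_left _ hp)
  have hD_words {d q} (hd : d ∈ D) (hq : q ∈ shiftCoding d.1 d.2) : q.1 ∈ forcingWords c D :=
    List.mem_map_of_mem (List.mem_append_right _ (List.mem_flatMap.2 ⟨d, hd, hq⟩))
  constructor
  · intro h y hy
    let Z : PatternCoding k A := (forcingWords c D).map fun w => (w, y (f w))
    have hZ (t) : t ∈ Z ↔ t.1 ∈ forcingWords c D ∧ y (f t.1) = t.2 := by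
      simp [Z, Prod.ext_iff, eq_comm]
    have hZ_mem : Z ∈ assignments (forcingWords c D) := by
      simp [mem_assignments, Z, Function.comp_def]
    have hZ_cons : ConsistentWith (fun w w' => f w = f w') Z := fun t ht t' ht' htt' => by
      rw [← ((hZ t).1 ht).2, ← ((hZ t').1 ht').2, htt']
    obtain ⟨d, hd, hdZ⟩ := h Z hZ_mem hZ_cons fun p hp => (hZ p).2 ⟨hc_words hp, hy p hp⟩
    exact ⟨d, hd, fun q hq => ((hZ q).1 (hdZ hq)).2⟩
  · intro h Z hZ hcons hc
    -- read off a configuration from `Z`; consistency makes it agree with every entry of `Z`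
    let y : β → A := fun b => if hb : ∃ t ∈ Z, f t.1 = b then hb.choose.2 else Classical.arbitrary A
    have hy (t) (ht : t ∈ Z) : y (f t.1) = t.2 := by
      have hb : ∃ t' ∈ Z, f t'.1 = f t.1 := ⟨t, ht, rfl⟩
      simp only [y, dif_pos hb]
      exact hcons _ hb.choose_spec.1 t ht hb.choose_spec.2
    obtain ⟨d, hd, hocc⟩ := h y fun p hp => hy p (hc hp)
    refine ⟨d, hd, fun q hq => ?_⟩
    obtain ⟨t, ht, htq⟩ := List.mem_map.1 ((mem_assignments.1 hZ).symm ▸ hD_words hd hq)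
    have : t = q := Prod.ext htq (by rw [← hy t ht, htq, hocc q hq])
    exact this ▸ ht

section Primrec

variable [Primcodable A]

open Primrec

theorem primrec_shiftCoding : Primrec₂ (shiftCoding : List (Fin k) → PatternCoding k A → _) :=
  list_map snd (pair (list_append.comp (fst.comp fst) (fst.comp snd)) (snd.comp snd)).to₂

theorem primrec_forcingWords :
    Primrec₂ (forcingWords : PatternCoding k A → List (List (Fin k) × PatternCoding k A) → _) :=
  list_map (list_append.comp fst (list_flatMap snd
    (primrec_shiftCoding.comp (fst.comp snd) (snd.comp snd)).to₂)) (fst.comp snd).to₂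

theorem primrec_assignments [Fintype A] :
    Primrec (assignments : List (List (Fin k)) → List (PatternCoding k A)) :=
  list_sections.comp (list_map Primrec.id
    (list_map (const _) (pair (snd.comp fst) snd).to₂).to₂)

theorem primrecRel_consistentWith {α : Type} [Primcodable α]
    {E : α → List (Fin k) → List (Fin k) → Prop}
    (hE : PrimrecPred fun x : α × List (Fin k) × List (Fin k) => E x.1 x.2.1 x.2.2) :
    PrimrecRel fun a (Z : PatternCoding k A) => ConsistentWith (E a) Z :=
  PrimrecPred.forall_mem snd <| PrimrecPred.forall_mem (snd.comp fst) <|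
    (hE.comp (pair (fst.comp (fst.comp fst)) (pair (fst.comp (snd.comp fst)) (fst.comp snd)))).imp
      (Primrec.eq.comp (snd.comp (snd.comp fst)) (snd.comp snd))

theorem primrecPred_forces [Fintype A] {α : Type} [Primcodable α]
    {E : α → List (Fin k) → List (Fin k) → Prop} {c : α → PatternCoding k A}
    {D : α → List (List (Fin k) × PatternCoding k A)}
    (hE : PrimrecPred fun x : α × List (Fin k) × List (Fin k) => E x.1 x.2.1 x.2.2)
    (hc : Primrec c) (hD : Primrec D) : PrimrecPred fun a => Forces (E a) (c a) (D a) :=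
  PrimrecPred.forall_mem (primrec_assignments.comp (primrec_forcingWords.comp hc hD)) <|
    (primrecRel_consistentWith hE).imp <|
      (PrimrecRel.list_subset.comp (hc.comp fst) snd).imp <|
        PrimrecPred.exists_mem (hD.comp fst) <| PrimrecRel.list_subset.comp
          (primrec_shiftCoding.comp (fst.comp snd) (snd.comp snd)) (snd.comp fst)

end Primrec

end Forcing

section Compactness

variable {G : Type} [Group G] {k : ℕ} {A : Type}

theorem isOpen_setOf_occurs [TopologicalSpace A] [DiscreteTopology A] (S : Fin k → G) (g : G)
    (c : PatternCoding k A) : IsOpen {y : G → A | ∀ p ∈ c, y (g * wordEval S p.1) = p.2} := by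
  simp only [Set.ofPred_forall]
  exact (List.finite_toSet c).isOpen_biInter fun p _ =>
    (isOpen_discrete {p.2}).preimage (continuous_apply (g * wordEval S p.1) :
      Continuous fun y : G → A => y (g * wordEval S p.1))

theorem exists_finset_forall_occurs_of_not_mem_projection [Finite A] {ι : Type} (e : ι → G)
    (S : Fin k → G) {C : Set (PatternCoding k A)} {x : ι → A}
    (hx : ¬ ∃ y ∈ XC S C, ∀ i, x i = y (e i)) :
    ∃ (F : Finset ι) (O : Finset (G × PatternCoding k A)), (∀ o ∈ O, o.2 ∈ C) ∧
      ∀ y : G → A, (∀ i ∈ F, y (e i) = x i) →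
        ∃ o ∈ O, ∀ p ∈ o.2, y (o.1 * wordEval S p.1) = p.2 := by
  let _ : TopologicalSpace A := ⊥
  have : DiscreteTopology A := ⟨rfl⟩
  let V : ι ⊕ {o : G × PatternCoding k A // o.2 ∈ C} → Set (G → A) :=
    Sum.elim (fun i => {y | y (e i) = x i})
      fun o => {y | ∀ p ∈ o.1.2, y (o.1.1 * wordEval S p.1) = p.2}ᶜ
  have hV : ∀ j, IsClosed (V j)
    | .inl i => isClosed_eq (continuous_apply _) continuous_const
    | .inr o => (isOpen_setOf_occurs S o.1.1 o.1.2).isClosed_compl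
  obtain ⟨t, ht⟩ := isCompact_univ.elim_finite_subfamily_closed V hV <| by
    refine Set.eq_empty_of_forall_notMem fun y ⟨_, hy⟩ => hx ⟨y, ?_, fun i => ?_⟩
    · rintro ⟨g, c, hc, hocc⟩
      exact Set.mem_iInter.1 hy (.inr ⟨(g, c), hc⟩) hocc
    · exact (Set.mem_iInter.1 hy (.inl i)).symm
  refine ⟨t.toLeft, t.toRight.image Subtype.val, fun o ho => ?_, fun y hy => ?_⟩
  · obtain ⟨o', -, rfl⟩ := Finset.mem_image.1 ho
    exact o'.2
  by_contra hno
  refine (Set.eq_empty_iff_forall_notMem.1 ht) y ⟨trivial, Set.mem_iInter₂.2 ?_⟩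
  rintro (i | o) hj
  · exact hy i (Finset.mem_toLeft.2 hj)
  · exact fun hocc => hno ⟨o.1, Finset.mem_image_of_mem _ (Finset.mem_toRight.2 hj), hocc⟩

end Compactness

section Projection

variable {G : Type} [Group G] {k : ℕ} {S : Fin k → G} {K : Type} [Group K] {m : ℕ}
  {T : Fin m → K} {A : Type}

def translateCoding (u : Fin m → List (Fin k)) (c : PatternCoding m A) : PatternCoding k A :=
  c.map fun p => (p.1.flatMap u, p.2)

def certifiedForbidden [Fintype A] (Ew : ℕ → List (Fin k) → Prop)
    (Cs : ℕ → PatternCoding k A → Prop) (ι : Fin k → Fin k) (u : Fin m → List (Fin k)) :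
    Set (PatternCoding m A) :=
  {c | ∃ q : ℕ × List (List (Fin k) × PatternCoding k A), (∀ d ∈ q.2, Cs q.1 d.2) ∧
    Forces (fun w w' => Ew q.1 (w ++ wordInv ι w')) (translateCoding u c) q.2}

open Primrec in
theorem rePred_certifiedForbidden [Fintype A] [Primcodable A] {Ew : ℕ → List (Fin k) → Prop}
    {Cs : ℕ → PatternCoding k A → Prop} (hEw : PrimrecRel Ew) (hCs : PrimrecRel Cs)
    (ι : Fin k → Fin k) (u : Fin m → List (Fin k)) :
    REPred (· ∈ certifiedForbidden Ew Cs ι u) := by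
  have htranslate : Primrec (translateCoding (A := A) u) :=
    list_map Primrec.id (pair (list_flatMap (fst.comp snd) ((dom_finite u).comp snd).to₂)
      (snd.comp snd)).to₂
  refine PrimrecRel.rePred_exists (R := fun (c : PatternCoding m A)
    (q : ℕ × List (List (Fin k) × PatternCoding k A)) => (∀ d ∈ q.2, Cs q.1 d.2) ∧ _) ?_
  refine (PrimrecPred.forall_mem (snd.comp snd)
    (hCs.comp (fst.comp (snd.comp fst)) (snd.comp snd))).and ?_
  exact primrecPred_forces (hEw.comp (fst.comp (snd.comp fst)) (list_append.comp (fst.comp snd)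
    (list_map (list_reverse.comp (snd.comp snd)) ((dom_finite ι).comp snd).to₂)))
    (htranslate.comp fst) (snd.comp snd)

theorem wordEval_of_mem_translateCoding {u : Fin m → List (Fin k)} (e : K →* G)
    (hu : ∀ i, wordEval S (u i) = e (T i)) {c : PatternCoding m A} {p : List (Fin k) × A}
    (hp : p ∈ translateCoding u c) :
    ∃ p₀ ∈ c, wordEval S p.1 = e (wordEval T p₀.1) ∧ p.2 = p₀.2 := by
  obtain ⟨p₀, hp₀, rfl⟩ := List.mem_map.1 hp
  exact ⟨p₀, hp₀, wordEval_flatMap S e hu p₀.1, rfl⟩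

theorem projection_subset_XC_certifiedForbidden [Fintype A] {C : Set (PatternCoding k A)}
    {Ew : ℕ → List (Fin k) → Prop} {Cs : ℕ → PatternCoding k A → Prop} {ι : Fin k → Fin k}
    {u : Fin m → List (Fin k)} (e : K →* G) (hι : ∀ i, S (ι i) = (S i)⁻¹)
    (hu : ∀ i, wordEval S (u i) = e (T i)) (hEw : ∀ s w, Ew s w → wordEval S w = 1)
    (hCs : ∀ s c, Cs s c → c ∈ C) :
    {x : K → A | ∃ y ∈ XC S C, ∀ h, x h = y (e h)} ⊆ XC T (certifiedForbidden Ew Cs ι u) := by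
  rintro x ⟨y, hy, hxy⟩ ⟨g, c, ⟨⟨s, D⟩, hD, hforces⟩, hocc⟩
  have : Nonempty A := ⟨y 1⟩
  let f := fun w => e g * wordEval S w
  have hforces' : Forces (fun w w' => f w = f w') (translateCoding u c) D :=
    hforces.mono fun w _ w' _ h => by
      simp [f, (wordEval_append_wordInv_eq_one hι).1 (hEw s _ h)]
  obtain ⟨d, hd, hdocc⟩ := (forces_iff f).1 hforces' y fun p hp => by
    obtain ⟨p₀, hp₀, h₁, h₂⟩ := wordEval_of_mem_translateCoding e hu hp
    simp only [f, h₁, h₂, ← map_mul, ← hxy, hocc p₀ hp₀]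
  refine hy ⟨e g * wordEval S d.1, d.2, hCs s _ (hD d hd), fun q hq => ?_⟩
  simpa [f, shiftCoding, mul_assoc] using hdocc _ (List.mem_map_of_mem hq)

theorem exists_stage_forces [Fintype A] {C : Set (PatternCoding k A)}
    {Ew : ℕ → List (Fin k) → Prop} {Cs : ℕ → PatternCoding k A → Prop} {ι : Fin k → Fin k}
    (hι : ∀ i, S (ι i) = (S i)⁻¹) (hEw : ∀ w, wordEval S w = 1 → ∀ᶠ s in atTop, Ew s w)
    (hCs : ∀ c ∈ C, ∀ᶠ s in atTop, Cs s c) {c : PatternCoding k A}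
    {D : List (List (Fin k) × PatternCoding k A)} (hDC : ∀ d ∈ D, d.2 ∈ C)
    (hforces : Forces (fun w w' => wordEval S w = wordEval S w') c D) :
    ∃ s, (∀ d ∈ D, Cs s d.2) ∧ Forces (fun w w' => Ew s (w ++ wordInv ι w')) c D := by
  obtain ⟨s, hDs, hEs⟩ :=
    (((eventually_all_finite D.finite_toSet).2 fun d hd => hCs _ (hDC d hd)).and
    ((eventually_all_finite (List.finite_toSet (forcingWords c D))).2 fun w _ =>
      (eventually_all_finite (List.finite_toSet (forcingWords c D))).2 fun w' _ =>
        eventually_imp_distrib_left.2 fun h =>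
          hEw _ ((wordEval_append_wordInv_eq_one hι).2 h))).exists
  exact ⟨s, hDs, hforces.mono hEs⟩

theorem XC_certifiedForbidden_subset_projection [Fintype A] {C : Set (PatternCoding k A)}
    {Ew : ℕ → List (Fin k) → Prop} {Cs : ℕ → PatternCoding k A → Prop} {ι : Fin k → Fin k}
    {u : Fin m → List (Fin k)} (e : K →* G) (hS : IsGenData S) (hT : IsGenData T)
    (hι : ∀ i, S (ι i) = (S i)⁻¹) (hu : ∀ i, wordEval S (u i) = e (T i))
    (hEw : ∀ w, wordEval S w = 1 → ∀ᶠ s in atTop, Ew s w)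
    (hCs : ∀ c ∈ C, ∀ᶠ s in atTop, Cs s c) :
    XC T (certifiedForbidden Ew Cs ι u) ⊆ {x : K → A | ∃ y ∈ XC S C, ∀ h, x h = y (e h)} := by
  intro x hx
  by_contra hproj
  have : Nonempty A := ⟨x 1⟩
  obtain ⟨F, O, hOC, hcov⟩ := exists_finset_forall_occurs_of_not_mem_projection e S hproj
  choose wT hwT using hT.exists_wordEval_eq
  choose wS hwS using hS.exists_wordEval_eq
  let c : PatternCoding m A := F.toList.map fun h => (wT h, x h)
  let D := O.toList.map fun o => (wS o.1, o.2)
  have hforces : Forces (fun w w' => wordEval S w = wordEval S w') (translateCoding u c) D := by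
    refine (forces_iff _).2 fun y hy => ?_
    obtain ⟨o, ho, hocc⟩ := hcov y fun h hh => by
      simpa [wordEval_flatMap S e hu, hwT] using
        hy ((wT h).flatMap u, x h) (List.mem_map_of_mem (List.mem_map_of_mem (by simpa)))
    refine ⟨(wS o.1, o.2), List.mem_map_of_mem (by simpa), fun q hq => ?_⟩
    obtain ⟨q₀, hq₀, rfl⟩ := List.mem_map.1 hq
    simpa [hwS] using hocc q₀ hq₀
  have hDC : ∀ d ∈ D, d.2 ∈ C := fun d hd => by
    obtain ⟨o, ho, rfl⟩ := List.mem_map.1 hd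
    exact hOC o (Finset.mem_toList.1 ho)
  obtain ⟨s, hDs, hforces_s⟩ := exists_stage_forces hι hEw hCs hDC hforces
  refine hx ⟨1, c, ⟨(s, D), hDs, hforces_s⟩, fun p hp => ?_⟩
  obtain ⟨h, -, rfl⟩ := List.mem_map.1 hp
  simp [hwT]

end Projection

theorem effectivelyClosed_projective_subdynamics_general
    {G : Type} [Group G] {k : ℕ} (S : Fin k → G) (hS : IsGenData S)
    (hWP : REPred (· ∈ WP S))
    (H : Subgroup G) {m : ℕ} (T : Fin m → H) (hT : IsGenData T)
    {A : Type} [Fintype A] [Primcodable A] (X : Set (G → A))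
    (hX : EffectivelyClosed S X) :
    EffectivelyClosed T {x : H → A | ∃ y ∈ X, ∀ h : H, x h = y ↑h} := by
  obtain ⟨C, hC, rfl⟩ := hX
  obtain ⟨Ew, hEw, hEw_sound, hEw_complete⟩ := hWP.exists_primrecRel_stages
  obtain ⟨Cs, hCs, hCs_sound, hCs_complete⟩ := hC.exists_primrecRel_stages
  choose ι hι using hS.2.1
  choose u hu using fun i => hS.exists_wordEval_eq (T i : G)
  refine ⟨certifiedForbidden Ew Cs ι u, rePred_certifiedForbidden hEw hCs ι u, ?_⟩
  exact subset_antisymm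
    (projection_subset_XC_certifiedForbidden H.subtype hι hu hEw_sound hCs_sound)
    (XC_certifiedForbidden_subset_projection H.subtype hS hT hι hu hEw_complete hCs_complete)

/-- Over a recursively presented group, the projective subdynamics of an
effectively closed subshift onto a finitely generated subgroup is effectively closed. -/
theorem effectivelyClosed_projective_subdynamics
    {G : Type} [Group G] {k : ℕ} (S : Fin k → G) (hS : IsGenData S)
    (hWP : REPred (· ∈ WP S))
    (H : Subgroup G) {m : ℕ} (T : Fin m → H) (hT : IsGenData T)
    {A : Type} [Fintype A] [Primcodable A] (X : Set (G → A))
    (hsub : IsSubshift X) (hX : EffectivelyClosed S X) :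
    EffectivelyClosed T {x : H → A | ∃ y ∈ X, ∀ h : H, x h = y ↑h} :=
  effectivelyClosed_projective_subdynamics_general S hS hWP H T hT X hX

end SDG
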